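/- arXiv:2312.02861 — 5 statements merged into one kernel-verified Lean document; each statement's English description precedes it below -/
import Mathlib

section
/- A based quantum torus framing is determined by its values on the standard basis (eq. (20) of the paper, after Berenstein–Zelevinsky Lemma 4.4): under the stated hypotheses, every value B λ is a unit of R with two-sided inverse B (-λ), and for every λ : Fin N → ℤ one has B λ = v^{-∑_{i<j} λ i · λ j · ω i j} * ∏_{i=0}^{N-1} (B (e i))^{λ i}, where the factors are integer powers of the units B (e i) taken in increasing order of the index i. -/
/-!
Put `⟨λ, μ⟩ = ω(λ, μ)` for the bilinear form of `ω`; the framing identity reads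
`B (λ + μ) = v ^ (-⟨λ, μ⟩) * B λ * B μ`. Since `ω` is alternating, `⟨λ, λ⟩ = 0`, so `B` is
multiplicative along every line `ℤ • λ`: this gives `B λ * B (-λ) = 1` and `B (n • eᵢ) = B (eᵢ) ^ n`.
Splitting `λ = ∑ᵢ λᵢ • eᵢ` and peeling off the last summand, each step contributes
`-⟨∑_{i<k} λᵢ eᵢ, λₖ eₖ⟩ = -∑_{i<k} λᵢ λₖ ω i k` to the exponent of `v`. The summand is split off
on the right, so `v` never has to be moved past a value of `B`.
-/

open Finset

structure IsQuantumTorusFraming {A R : Type*} [AddCommGroup A] [Module ℤ A] [Ring R]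
    (v : Rˣ) (ω : LinearMap.BilinForm ℤ A) (B : A → R) : Prop where
  map_zero : B 0 = 1
  mul_eq : ∀ a b, B a * B b = ((v ^ ω a b : Rˣ) : R) * B (a + b)

namespace IsQuantumTorusFraming

variable {A R : Type*} [AddCommGroup A] [Module ℤ A] [Ring R] {v : Rˣ}
  {ω : LinearMap.BilinForm ℤ A} {B : A → R}

theorem map_add (hB : IsQuantumTorusFraming v ω B) (a b : A) :
    B (a + b) = ((v ^ (-ω a b) : Rˣ) : R) * (B a * B b) := by
  rw [hB.mul_eq, ← mul_assoc, ← Units.val_mul, ← zpow_add, neg_add_cancel, zpow_zero,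
    Units.val_one, one_mul]

theorem map_add_of_eq_zero (hB : IsQuantumTorusFraming v ω B) {a b : A} (h : ω a b = 0) :
    B (a + b) = B a * B b := by
  rw [hB.map_add, h, neg_zero, zpow_zero, Units.val_one, one_mul]

theorem mul_map_neg (hB : IsQuantumTorusFraming v ω B) (hω : ω.IsAlt) (a : A) :
    B a * B (-a) = 1 := by
  rw [← hB.map_add_of_eq_zero (by simp [hω.self_eq_zero]), add_neg_cancel, hB.map_zero]

theorem map_neg_mul (hB : IsQuantumTorusFraming v ω B) (hω : ω.IsAlt) (a : A) :
    B (-a) * B a = 1 := by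
  simpa using hB.mul_map_neg hω (-a)

theorem map_zsmul (hB : IsQuantumTorusFraming v ω B) (hω : ω.IsAlt) {a : A} {u : Rˣ}
    (hu : (u : R) = B a) (n : ℤ) : B (n • a) = ((u ^ n : Rˣ) : R) := by
  have hω_zsmul (m k : ℤ) : ω (m • a) (k • a) = 0 := by simp [hω.self_eq_zero]
  induction n using Int.induction_on with
  | zero => simp [hB.map_zero]
  | succ n ih =>
    rw [add_zsmul, one_zsmul, hB.map_add_of_eq_zero (by simpa using hω_zsmul n 1), ih, ← hu,
      ← Units.val_mul, zpow_add_one]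
  | pred n ih =>
    have hu_inv : ((u⁻¹ : Rˣ) : R) = B (-a) := by
      rw [← mul_one ((u⁻¹ : Rˣ) : R), ← hB.mul_map_neg hω a, ← hu, ← mul_assoc,
        ← Units.val_mul, inv_mul_cancel, Units.val_one, one_mul]
    rw [sub_zsmul, one_zsmul, sub_eq_add_neg,
      hB.map_add_of_eq_zero (by simpa using hω_zsmul (-n) (-1)), ih, ← hu_inv,
      ← Units.val_mul, zpow_add, zpow_neg_one]

theorem map_sum_fin (hB : IsQuantumTorusFraming v ω B) {n : ℕ} (f : Fin n → A) :
    B (∑ i, f i) = ((v ^ (-∑ i, ∑ j, if i < j then ω (f i) (f j) else 0) : Rˣ) : R) *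
      ((List.finRange n).map fun i => B (f i)).prod := by
  induction n with
  | zero => simp [hB.map_zero]
  | succ n ih =>
    have hsplit : (∑ i : Fin (n + 1), ∑ j, if i < j then ω (f i) (f j) else 0) =
        ω (∑ i : Fin n, f i.castSucc) (f (Fin.last n)) +
          ∑ i : Fin n, ∑ j : Fin n, if i < j then ω (f i.castSucc) (f j.castSucc) else 0 := by
      simp [Fin.sum_univ_castSucc, Fin.castSucc_lt_last, (Fin.le_last _).not_gt, sum_add_distrib,
        add_comm]
    rw [Fin.sum_univ_castSucc, hB.map_add, ih, hsplit, List.finRange_succ_last, List.map_append,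
      List.prod_append, List.map_map, List.map_singleton, List.prod_singleton, neg_add, zpow_add,
      Units.val_mul]
    simp only [mul_assoc, Function.comp_def]

end IsQuantumTorusFraming

theorem Matrix.isAlt_toBilin'_of_skew {n R : Type*} [Fintype n] [DecidableEq n] [CommRing R]
    [IsAddTorsionFree R] {M : Matrix n n R} (hM : ∀ i j, M i j = -M j i) :
    (Matrix.toBilin' M).IsAlt := by
  intro x
  refine self_eq_neg.mp ?_
  rw [Matrix.toBilin'_apply]
  conv_lhs => rw [sum_comm]
  simp only [← sum_neg_distrib]
  refine sum_congr rfl fun i _ => sum_congr rfl fun j _ => ?_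
  rw [hM j i]
  ring

theorem stmt_1_general {R : Type*} [Ring R] (v : Rˣ)
    (N : ℕ) (ω : Fin N → Fin N → ℤ)
    (hω : ∀ i j, ω i j = -ω j i)
    (B : (Fin N → ℤ) → R)
    (hB0 : B 0 = 1)
    (hBmul : ∀ l m : Fin N → ℤ,
      B l * B m =
        ((v ^ (∑ i : Fin N, ∑ j : Fin N, l i * m j * ω i j) : Rˣ) : R) * B (l + m)) :
    (∀ l : Fin N → ℤ, B l * B (-l) = 1 ∧ B (-l) * B l = 1) ∧
      ∃ u : Fin N → Rˣ,
        (∀ i : Fin N, (u i : R) = B (fun j => if j = i then 1 else 0)) ∧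
        ∀ l : Fin N → ℤ,
          B l =
            ((v ^ (-(∑ i : Fin N, ∑ j : Fin N, if i < j then l i * l j * ω i j else 0)) :
                Rˣ) : R) *
              ((((List.finRange N).map (fun i => u i ^ (l i))).prod : Rˣ) : R) := by
  have hB : IsQuantumTorusFraming v (Matrix.toBilin' (.of ω)) B :=
    ⟨hB0, fun l m => by
      rw [hBmul, Matrix.toBilin'_apply]; simp only [Matrix.of_apply, mul_right_comm (l _) (m _)]⟩
  have hω' := Matrix.isAlt_toBilin'_of_skew hω
  let u (i : Fin N) : Rˣ :=
    ⟨B (Pi.single i 1), B (-Pi.single i 1), hB.mul_map_neg hω' _, hB.map_neg_mul hω' _⟩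
  refine ⟨fun l => ⟨hB.mul_map_neg hω' l, hB.map_neg_mul hω' l⟩, u,
    fun i => congrArg B (funext fun j => Pi.single_apply i 1 j), fun l => ?_⟩
  have hpair (i j : Fin N) :
      Matrix.toBilin' (.of ω) (l i • Pi.single i 1) (l j • Pi.single j 1) = l i * l j * ω i j := by
    simp only [map_zsmul, LinearMap.smul_apply, Matrix.toBilin'_single, Matrix.of_apply,
      smul_eq_mul]
    ring
  have hpow (i : Fin N) : B (l i • Pi.single i 1) = ((u i ^ l i : Rˣ) : R) :=
    hB.map_zsmul hω' rfl (l i)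
  conv_lhs => rw [pi_eq_sum_univ' l, hB.map_sum_fin]
  simp only [hpair, hpow]
  exact congrArg _ (List.prod_map_hom _ _ (Units.coeHom R))

/-- A framing of a based quantum torus is determined by its values on
the standard basis (eq. (20) of the paper, after Berenstein–Zelevinsky Lemma 4.4):
if `B : (Fin N → ℤ) → R` satisfies `B 0 = 1` and
`B λ * B μ = v ^ ⟨λ,μ⟩ * B (λ + μ)` for a central unit `v` and a skew-symmetric `ω`,
then every `B λ` is a unit with two-sided inverse `B (-λ)`, and
`B λ = v ^ (-∑_{i<j} λ i * λ j * ω i j) * ∏_{i} (B (e i)) ^ (λ i)`, the factors being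
integer powers of the units `B (e i)` taken in increasing order of the index `i`. -/
theorem stmt_1 {R : Type*} [Ring R] (v : Rˣ)
    (hv : ∀ r : R, (v : R) * r = r * (v : R))
    (N : ℕ) (ω : Fin N → Fin N → ℤ)
    (hω : ∀ i j, ω i j = -ω j i)
    (B : (Fin N → ℤ) → R)
    (hB0 : B 0 = 1)
    (hBmul : ∀ l m : Fin N → ℤ,
      B l * B m =
        ((v ^ (∑ i : Fin N, ∑ j : Fin N, l i * m j * ω i j) : Rˣ) : R) * B (l + m)) :
    (∀ l : Fin N → ℤ, B l * B (-l) = 1 ∧ B (-l) * B l = 1) ∧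
      ∃ u : Fin N → Rˣ,
        (∀ i : Fin N, (u i : R) = B (fun j => if j = i then 1 else 0)) ∧
        ∀ l : Fin N → ℤ,
          B l =
            ((v ^ (-(∑ i : Fin N, ∑ j : Fin N, if i < j then l i * l j * ω i j else 0)) :
                Rˣ) : R) *
              ((((List.finRange N).map (fun i => u i ^ (l i))).prod : Rˣ) : R) :=
  stmt_1_general v N ω hω B hB0 hBmul
end

section
/- Permutation invariance of the normalized ordered monomial (the assertion following eq. (20) of the paper that both sides of the formula for B_λ are invariant under permutations of indices): under the stated hypotheses, for every permutation σ of Fin N and every λ : Fin N → ℤ, M λ = v^{-∑_{i<j} λ(σ i) · λ(σ j) · ω (σ i) (σ j)} * ∏_{i=0}^{N-1} (A (σ i))^{λ (σ i)}, the product taken in increasing order of the index i. -/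
/-!
Write the normalized monomial over an arbitrary ordering `L` of the indices as
`v ^ (-∑_{a before b in L} f a b) * ∏_{i ∈ L} g i` with `g i = A i ^ λ i` and
`f i j = λ i λ j ω i j`. Powers of q-commuting units q-commute again
(`g i g j = v ^ (2 f i j) g j g i`), so swapping two adjacent factors multiplies the product by
`v ^ (2 f i j)` while the skew-symmetry of `f` changes the normalizing exponent by exactly
the opposite amount. Since adjacent swaps generate all permutations of a list, the expression
does not depend on the ordering.
-/

section OrderedPairSum

variable {ι κ : Type*}

def orderedPairSum (f : ι → ι → ℤ) : List ι → ℤ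
  | [] => 0
  | a :: t => (t.map (f a)).sum + orderedPairSum f t

lemma orderedPairSum_map (f : κ → κ → ℤ) (σ : ι → κ) (L : List ι) :
    orderedPairSum f (L.map σ) = orderedPairSum (fun i j => f (σ i) (σ j)) L := by
  induction L with
  | nil => rfl
  | cons a t ih => simp [orderedPairSum, ih, Function.comp_def]

lemma orderedPairSum_finRange {N : ℕ} (f : Fin N → Fin N → ℤ) :
    orderedPairSum f (List.finRange N) = ∑ i, ∑ j, if i < j then f i j else 0 := by
  induction N with
  | zero => rfl
  | succ n ih =>
    rw [List.finRange_succ, orderedPairSum, orderedPairSum_map, ih, List.map_map]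
    simp [Fin.sum_univ_succ, Fin.succ_lt_succ_iff, Fin.sum_univ_def, Function.comp_def]

end OrderedPairSum

section QCommute

variable {G : Type*} [Group G] {z a b : G}

lemma mul_zpow_eq_of_mul_eq (hz : ∀ g, Commute z g) (h : a * b = z * (b * a)) (n : ℤ) :
    a * b ^ n = z ^ n * (b ^ n * a) := by
  have hsemi := (show SemiconjBy a b (z * b) by rw [SemiconjBy, h, mul_assoc]).zpow_right n
  rw [SemiconjBy, (hz b).mul_zpow] at hsemi
  rw [hsemi, mul_assoc]

lemma zpow_mul_zpow_eq_of_mul_eq (hz : ∀ g, Commute z g) (h : a * b = z * (b * a)) (m n : ℤ) :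
    a ^ m * b ^ n = z ^ (m * n) * (b ^ n * a ^ m) := by
  have h' : b ^ n * a = (z ^ n)⁻¹ * (a * b ^ n) := by
    rw [mul_zpow_eq_of_mul_eq hz h, inv_mul_cancel_left]
  have hba := mul_zpow_eq_of_mul_eq (fun g => ((hz g).zpow_left n).inv_left) h' m
  rw [hba, ← mul_assoc, inv_zpow', ← zpow_mul, ← zpow_add, show m * n + n * -m = 0 by ring,
    zpow_zero, one_mul]

end QCommute

section NormalizedProd

variable {G ι : Type*} [Group G] (v : G) (f : ι → ι → ℤ) (g : ι → G)

def normalizedProd (L : List ι) : G :=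
  v ^ (-orderedPairSum f L) * (L.map g).prod

lemma normalizedProd_cons (hv : ∀ x, Commute v x) (a : ι) (L : List ι) :
    normalizedProd v f g (a :: L) = v ^ (-(L.map (f a)).sum) * (g a * normalizedProd v f g L) := by
  rw [normalizedProd, normalizedProd, orderedPairSum, neg_add, zpow_add, List.map_cons,
    List.prod_cons, mul_assoc, ((hv (g a)).zpow_left _).left_comm]

lemma normalizedProd_perm (hv : ∀ x, Commute v x) (hf : ∀ i j, f i j = -f j i)
    (hg : ∀ i j, g i * g j = v ^ (2 * f i j) * (g j * g i)) {L₁ L₂ : List ι} (h : L₁.Perm L₂) :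
    normalizedProd v f g L₁ = normalizedProd v f g L₂ := by
  induction h with
  | nil => rfl
  | cons a h ih =>
    rw [normalizedProd_cons v f g hv, normalizedProd_cons v f g hv, ih, (h.map _).sum_eq]
  | swap a b L =>
    simp only [normalizedProd, orderedPairSum, List.map_cons, List.sum_cons, List.prod_cons]
    rw [← mul_assoc (g b), hg b a, mul_assoc, mul_assoc, ← mul_assoc (v ^ _), ← zpow_add, hf a b]
    congr 2
    ring
  | trans _ _ ih₁ ih₂ => exact ih₁.trans ih₂

end NormalizedProd

/-- Permutation invariance of the normalized ordered monomial
(the assertion following eq. (20) of the paper): for every permutation `σ` of `Fin N`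
and every `λ : Fin N → ℤ`,
`M λ = v ^ (-∑_{i<j} λ(σ i) * λ(σ j) * ω (σ i) (σ j)) * ∏_{i} (A (σ i)) ^ (λ (σ i))`,
the product taken in increasing order of the index `i`. -/
theorem stmt_2 {R : Type*} [Ring R] (v : Rˣ)
    (hv : ∀ r : R, (v : R) * r = r * (v : R))
    (N : ℕ) (ω : Fin N → Fin N → ℤ)
    (hω : ∀ i j, ω i j = -ω j i)
    (A : Fin N → Rˣ)
    (hA : ∀ i j, A i * A j = v ^ (2 * ω i j) * (A j * A i))
    (M : (Fin N → ℤ) → Rˣ)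
    (hM : ∀ l : Fin N → ℤ,
      M l = v ^ (-(∑ i : Fin N, ∑ j : Fin N, if i < j then l i * l j * ω i j else 0)) *
        ((List.finRange N).map (fun i => A i ^ (l i))).prod) :
    ∀ (σ : Equiv.Perm (Fin N)) (l : Fin N → ℤ),
      M l = v ^ (-(∑ i : Fin N, ∑ j : Fin N,
            if i < j then l (σ i) * l (σ j) * ω (σ i) (σ j) else 0)) *
          ((List.finRange N).map (fun i => A (σ i) ^ (l (σ i)))).prod := by
  intro σ l
  have hv_central : ∀ u : Rˣ, Commute v u := fun u => Units.ext (hv u)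
  set f : Fin N → Fin N → ℤ := fun i j => l i * l j * ω i j
  set g : Fin N → Rˣ := fun i => A i ^ l i
  have hf : ∀ i j, f i j = -f j i := fun i j => by simp only [f, hω i j]; ring
  have hg : ∀ i j, g i * g j = v ^ (2 * f i j) * (g j * g i) := fun i j => by
    rw [zpow_mul_zpow_eq_of_mul_eq (fun u => (hv_central u).zpow_left _) (hA i j), ← zpow_mul]
    congr 2
    simp only [f]
    ring
  have key := normalizedProd_perm v f g hv_central hf hg σ.map_finRange_perm
  simp only [normalizedProd, orderedPairSum_map, orderedPairSum_finRange, List.map_map] at key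
  rw [hM l]
  exact key.symm
end

section
/- Sign-independence of compatibility-matrix mutation (the assertion of the paper that formula (22) does not depend on the sign σ): under the stated compatibility hypotheses, E_{k,1}ᵀ · Π · E_{k,1} = E_{k,-1}ᵀ · Π · E_{k,-1}. -/
open Matrix

/-- The matrix `E_{k,σ}` of the paper: `(E_{k,σ})_{ij} = δ_{ij}` if `j ≠ k`,
`(E_{k,σ})_{kk} = -1`, and `(E_{k,σ})_{ik} = [-σ·ε_{ki}]_+` for `i ≠ k`. -/
def Emat {I : Type*} [DecidableEq I] {Iuf : Set I}
    (k : I) (hk : k ∈ Iuf) (ε : Matrix ↥Iuf I ℤ) (σ : ℤ) : Matrix I I ℤ :=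
  Matrix.of fun i j =>
    if j = k then (if i = k then -1 else max (-(σ * ε ⟨k, hk⟩ i)) 0)
    else if i = j then 1 else 0

/-!
Write `E_{k,σ} = 1 + u_σ e_kᵀ`. Since `uᵀ Π u = 0` for skew-symmetric `Π`, the congruence
`(1 + u e_kᵀ)ᵀ Π (1 + u e_kᵀ) = Π + (Π u) e_kᵀ + e_k (uᵀ Π)` is affine in `u`. The two columns
differ by `u_1 - u_{-1} = -ε_k` (because `[-x]_+ - [x]_+ = -x`, and `ε_{kk} = 0`), and
compatibility says `ε_kᵀ Π = d_k e_kᵀ`; by skew-symmetry `Π ε_k = -d_k e_k`, so the two affine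
corrections cancel.
-/

namespace Matrix

variable {n R : Type*} [Fintype n] [CommRing R]

theorem dotProduct_mulVec_self_eq_zero_of_transpose_eq_neg [IsAddTorsionFree R]
    {P : Matrix n n R} (hP : Pᵀ = -P) (u : n → R) : u ⬝ᵥ P *ᵥ u = 0 := by
  refine self_eq_neg.mp ?_
  calc u ⬝ᵥ P *ᵥ u = (Pᵀ *ᵥ u) ⬝ᵥ u := by rw [dotProduct_mulVec, mulVec_transpose]
    _ = -(u ⬝ᵥ P *ᵥ u) := by rw [hP, neg_mulVec, neg_dotProduct, dotProduct_comm]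

theorem transpose_one_add_vecMulVec_mul_mul_of_transpose_eq_neg [DecidableEq n]
    [IsAddTorsionFree R]
    {P : Matrix n n R} (hP : Pᵀ = -P) (u e : n → R) :
    (1 + vecMulVec u e)ᵀ * P * (1 + vecMulVec u e) =
      P + vecMulVec (P *ᵥ u) e + vecMulVec e (u ᵥ* P) := by
  have hquad : vecMulVec e u * P * vecMulVec u e = 0 := by
    rw [vecMulVec_mul, vecMulVec_mul_vecMulVec, ← dotProduct_mulVec,
      dotProduct_mulVec_self_eq_zero_of_transpose_eq_neg hP, zero_smul, vecMulVec_zero]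
  simp only [transpose_add, transpose_one, transpose_vecMulVec, add_mul, mul_add, one_mul,
    mul_one]
  rw [hquad, add_zero, mul_vecMulVec, vecMulVec_mul, add_right_comm]

theorem transpose_one_add_vecMulVec_mul_mul_eq_of_sub_vecMul_eq_smul [DecidableEq n]
    [IsAddTorsionFree R]
    {P : Matrix n n R} (hP : Pᵀ = -P) {u u' e : n → R} {c : R}
    (h : (u - u') ᵥ* P = c • e) :
    (1 + vecMulVec u e)ᵀ * P * (1 + vecMulVec u e) =
      (1 + vecMulVec u' e)ᵀ * P * (1 + vecMulVec u' e) := by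
  have hPw : P *ᵥ (u - u') = -(c • e) := by
    rw [← vecMul_transpose, hP, vecMul_neg, h]
  rw [transpose_one_add_vecMulVec_mul_mul_of_transpose_eq_neg hP,
    transpose_one_add_vecMulVec_mul_mul_of_transpose_eq_neg hP, ← sub_eq_zero]
  have hdiff : vecMulVec (P *ᵥ (u - u')) e + vecMulVec e ((u - u') ᵥ* P) = 0 := by
    rw [hPw, h, neg_vecMulVec, smul_vecMulVec, vecMulVec_smul, neg_add_cancel]
  rw [mulVec_sub, sub_vecMul, sub_vecMulVec, vecMulVec_sub] at hdiff
  rw [← hdiff]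
  abel

end Matrix

section Mutation

variable {I : Type*} [DecidableEq I] {Iuf : Set I} (k : I) (hk : k ∈ Iuf) (ε : Matrix ↥Iuf I ℤ)

def ematColumn (σ : ℤ) : I → ℤ :=
  fun i => if i = k then -2 else max (-(σ * ε ⟨k, hk⟩ i)) 0

theorem Emat_eq_one_add_vecMulVec (σ : ℤ) :
    Emat k hk ε σ = 1 + vecMulVec (ematColumn k hk ε σ) (Pi.single k 1) := by
  ext i j
  by_cases hj : j = k
  · by_cases hi : i = k <;> simp [Emat, ematColumn, one_apply, vecMulVec_apply, hi, hj]
  · simp [Emat, one_apply, vecMulVec_apply, hj]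

theorem ematColumn_one_sub_neg_one (hkk : ε ⟨k, hk⟩ k = 0) :
    ematColumn k hk ε 1 - ematColumn k hk ε (-1) = -ε ⟨k, hk⟩ := by
  ext i
  by_cases hi : i = k
  · simp [ematColumn, hi, hkk]
  · simp only [ematColumn, Pi.sub_apply, Pi.neg_apply, if_neg hi]
    omega

theorem vecMul_eq_smul_single_of_sum_mul_eq_ite [Fintype I] {P : Matrix I I ℤ}
    {d : ↥Iuf → ℤ} (h : ∀ (i : ↥Iuf) (j : I), ∑ b, ε i b * P b j = if (i : I) = j then d i else 0)
    (i : ↥Iuf) : ε i ᵥ* P = d i • Pi.single (i : I) 1 := by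
  ext j
  rw [vecMul, dotProduct, h, Pi.smul_apply, Pi.single_apply, eq_comm]
  by_cases hij : (i : I) = j <;> simp [hij, Ne.symm]

end Mutation

theorem stmt_5_general {I : Type*} [Fintype I] [DecidableEq I]
    {Iuf : Set I}
    (k : I) (hk : k ∈ Iuf)
    (ε : Matrix ↥Iuf I ℤ)
    (hεskew : ∀ i j : ↥Iuf, ε i (j : I) = -(ε j (i : I)))
    (Pmat : Matrix I I ℤ)
    (hPskew : Pmatᵀ = -Pmat)
    (d : ↥Iuf → ℤ)
    (hcompat : ∀ (i : ↥Iuf) (j : I),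
      ∑ b : I, ε i b * Pmat b j = if (i : I) = j then d i else 0) :
    (Emat k hk ε 1)ᵀ * Pmat * Emat k hk ε 1 =
      (Emat k hk ε (-1))ᵀ * Pmat * Emat k hk ε (-1) := by
  have hkk : ε ⟨k, hk⟩ k = 0 := by
    have h : ε ⟨k, hk⟩ k = -ε ⟨k, hk⟩ k := hεskew ⟨k, hk⟩ ⟨k, hk⟩
    omega
  simp only [Emat_eq_one_add_vecMulVec]
  refine transpose_one_add_vecMulVec_mul_mul_eq_of_sub_vecMul_eq_smul hPskew (c := -d ⟨k, hk⟩) ?_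
  rw [ematColumn_one_sub_neg_one k hk ε hkk, neg_vecMul,
    vecMul_eq_smul_single_of_sum_mul_eq_ite ε hcompat, neg_smul]

/-- Sign-independence of compatibility-matrix mutation
(formula (22) of the paper does not depend on the sign `σ`): if the principal
`I_uf × I_uf` submatrix of `ε` is skew-symmetric, `Π` is skew-symmetric, and the
compatibility relation `∑_b ε_{ib} Π_{bj} = δ_{ij} d_i` holds with positive integers
`d_i`, then `E_{k,1}ᵀ · Π · E_{k,1} = E_{k,-1}ᵀ · Π · E_{k,-1}`. -/
theorem stmt_5 {I : Type*} [Fintype I] [DecidableEq I]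
    {Iuf : Set I} [DecidablePred (· ∈ Iuf)]
    (k : I) (hk : k ∈ Iuf)
    (ε : Matrix ↥Iuf I ℤ)
    (hεskew : ∀ i j : ↥Iuf, ε i (j : I) = -(ε j (i : I)))
    (Pmat : Matrix I I ℤ)
    (hPskew : Pmatᵀ = -Pmat)
    (d : ↥Iuf → ℤ) (hd : ∀ i, 0 < d i)
    (hcompat : ∀ (i : ↥Iuf) (j : I),
      ∑ b : I, ε i b * Pmat b j = if (i : I) = j then d i else 0) :
    (Emat k hk ε 1)ᵀ * Pmat * Emat k hk ε 1 =
      (Emat k hk ε (-1))ᵀ * Pmat * Emat k hk ε (-1) :=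
  stmt_5_general k hk ε hεskew Pmat hPskew d hcompat
end

section
/- Well-definedness of quantum seed mutation (preservation of compatible pairs): under the stated compatibility hypotheses, set ε' := F_{k,σ}ᵀ · ε · E_{k,σ}ᵀ and Π' := E_{k,σ}ᵀ · Π · E_{k,σ} for either sign σ ∈ {1, -1}. Then Π' is skew-symmetric, the principal I_uf × I_uf submatrix of ε' is skew-symmetric, and the pair (ε', Π') again satisfies the compatibility relation with the same positive integers: ∑_{b∈I} ε'_{ib} · Π'_{bj} = δ_{ij} · d_i for all i ∈ I_uf and j ∈ I. -/
/-!
Since `E_{k,σ}` is an involution, `ε' Π' = F_{k,σ}ᵀ (ε Π) E_{k,σ} = F_{k,σ}ᵀ (D 0) E_{k,σ}`.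
Compatibility makes `ε Π εᵀ = (D 0) εᵀ` skew-symmetric, i.e. `d_i ε_{ki} = -d_k ε_{ik}`; as the
`d_i` are positive this passes to positive parts, `d_i [-σ ε_{ki}]_+ = d_k [σ ε_{ik}]_+`, which is
exactly what makes `F_{k,σ}ᵀ (D 0) E_{k,σ} = (D 0)`. Skew-symmetry of the principal part of `ε'`
is read off the explicit matrix mutation formula.
-/

open Matrix

/-- The matrix `F_{k,σ}` of the paper: `(F_{k,σ})_{ij} = δ_{ij}` if `i ≠ k`,
`(F_{k,σ})_{kk} = -1`, and `(F_{k,σ})_{kj} = [σ·ε_{jk}]_+` for `j ≠ k`. -/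
def Fmat {I : Type*} [DecidableEq I] {Iuf : Set I}
    (k : I) (hk : k ∈ Iuf) (ε : Matrix ↥Iuf I ℤ) (σ : ℤ) : Matrix ↥Iuf ↥Iuf ℤ :=
  Matrix.of fun i j =>
    if i = ⟨k, hk⟩ then (if j = ⟨k, hk⟩ then -1 else max (σ * ε j k) 0)
    else if i = j then 1 else 0

/-- The `I_uf × I` block matrix `(D 0)`, `D = diag(d)`: compatibility of `(ε, Π)` reads
`ε * Π = rectDiagonal d`. -/
def rectDiagonal {I : Type*} [DecidableEq I] {s : Set I} (d : s → ℤ) : Matrix s I ℤ :=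
  Matrix.of fun i j => if (i : I) = j then d i else 0

theorem rectDiagonal_mul_apply {I J : Type*} [Fintype I] [DecidableEq I] {s : Set I}
    (d : s → ℤ) (M : Matrix I J ℤ) (i : s) (j : J) :
    (rectDiagonal d * M) i j = d i * M i j := by
  simp [rectDiagonal, mul_apply, ite_mul]

theorem skewSymmetrizable_of_mul_eq_rectDiagonal {I : Type*} [Fintype I] [DecidableEq I]
    {s : Set I} {ε : Matrix s I ℤ} {P : Matrix I I ℤ} {d : s → ℤ}
    (hP : Pᵀ = -P) (hεP : ε * P = rectDiagonal d) (i j : s) :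
    d i * ε j i = -(d j * ε i j) := by
  have hskew : (ε * P * εᵀ)ᵀ = -(ε * P * εᵀ) := by
    rw [transpose_mul, transpose_mul, transpose_transpose, hP, Matrix.neg_mul, Matrix.mul_neg,
      Matrix.mul_assoc]
  have := congr_fun (congr_fun hskew j) i
  simpa [hεP, rectDiagonal_mul_apply] using this

section Mutation

variable {I : Type*} [DecidableEq I] {Iuf : Set I} (k : I) (hk : k ∈ Iuf)
  (ε : Matrix Iuf I ℤ) (σ : ℤ)

theorem Emat_apply_left_self (j : I) : Emat k hk ε σ k j = if j = k then -1 else 0 := by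
  by_cases h : j = k <;> simp [Emat, h, Ne.symm]

theorem Emat_apply_right_self {i : I} (hi : i ≠ k) :
    Emat k hk ε σ i k = max (-(σ * ε ⟨k, hk⟩ i)) 0 := by
  simp [Emat, hi]

theorem Emat_apply_of_ne {j : I} (i : I) (hj : j ≠ k) :
    Emat k hk ε σ i j = (1 : Matrix I I ℤ) i j := by
  simp [Emat, hj, one_apply]

theorem mul_Emat_transpose_apply [Fintype I] {J : Type*} (M : Matrix J I ℤ) (i : J) (j : I) :
    (M * (Emat k hk ε σ)ᵀ) i j =
      if j = k then -M i k else M i j + M i k * max (-(σ * ε ⟨k, hk⟩ j)) 0 := by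
  rw [mul_apply]
  split_ifs with hj
  · subst hj
    rw [Fintype.sum_eq_single j fun a ha => by simp [Emat_apply_left_self, ha]]
    simp [Emat_apply_left_self]
  · rw [Fintype.sum_eq_add j k hj fun a ha => by
      simp [Emat_apply_of_ne k hk ε σ _ ha.2, one_apply, Ne.symm ha.1]]
    simp [Emat_apply_of_ne k hk ε σ _ hj, Emat_apply_right_self k hk ε σ hj]

theorem Emat_transpose_mul_self [Fintype I] :
    (Emat k hk ε σ)ᵀ * (Emat k hk ε σ)ᵀ = 1 := by
  ext i j
  rw [mul_Emat_transpose_apply]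
  by_cases hj : j = k
  · subst hj
    by_cases hi : i = j <;> simp [Emat_apply_left_self, hi, one_apply]
  · by_cases hi : i = k
    · subst hi
      simp [Emat_apply_left_self, Emat_apply_right_self _ _ _ _ hj, one_apply, hj, Ne.symm hj]
    · simp [Emat_apply_left_self, Emat_apply_of_ne _ _ _ _ _ hi, hi, one_apply, eq_comm,
        Ne.symm hj]

theorem Fmat_transpose_mul_apply [Fintype Iuf] {J : Type*} (M : Matrix Iuf J ℤ)
    (i : Iuf) (j : J) :
    ((Fmat k hk ε σ)ᵀ * M) i j =
      if i = ⟨k, hk⟩ then -M ⟨k, hk⟩ j else M i j + max (σ * ε i k) 0 * M ⟨k, hk⟩ j := by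
  rw [mul_apply]
  split_ifs with hi
  · rw [Fintype.sum_eq_single i fun a ha => by simp [Fmat, ha, hi ▸ ha]]
    simp [Fmat, hi]
  · rw [Fintype.sum_eq_add i ⟨k, hk⟩ hi fun a ha => by simp [Fmat, ha.2, ha.1]]
    simp [Fmat, hi]

theorem Fmat_transpose_mul_mul_Emat_transpose_apply [Fintype I] [Fintype Iuf]
    (hkk : ε ⟨k, hk⟩ k = 0) (i : Iuf) (j : I) :
    ((Fmat k hk ε σ)ᵀ * ε * (Emat k hk ε σ)ᵀ) i j =
      if (i : I) = k ∨ j = k then -ε i j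
      else ε i j + ε i k * max (-(σ * ε ⟨k, hk⟩ j)) 0 + max (σ * ε i k) 0 * ε ⟨k, hk⟩ j := by
  rw [mul_Emat_transpose_apply, Fmat_transpose_mul_apply, Fmat_transpose_mul_apply]
  obtain ⟨i, hi⟩ := i
  by_cases hik : i = k
  · subst hik
    by_cases hj : j = i <;> simp [hj, hkk]
  · by_cases hj : j = k
    · simp [hik, hj, hkk]
    · simp only [Subtype.mk.injEq, hik, hj, or_self, if_false, hkk]
      ring

theorem Fmat_transpose_mul_mul_Emat_transpose_apply_eq_neg [Fintype I] [Fintype Iuf]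
    (hskew : ∀ i j : Iuf, ε i j = -ε j i) (i j : Iuf) :
    ((Fmat k hk ε σ)ᵀ * ε * (Emat k hk ε σ)ᵀ) i j =
      -((Fmat k hk ε σ)ᵀ * ε * (Emat k hk ε σ)ᵀ) j i := by
  have hkε : ∀ i : Iuf, ε ⟨k, hk⟩ i = -ε i k := hskew ⟨k, hk⟩
  have hkk : ε ⟨k, hk⟩ k = 0 := by linarith [hkε ⟨k, hk⟩]
  rw [Fmat_transpose_mul_mul_Emat_transpose_apply _ _ _ _ hkk,
    Fmat_transpose_mul_mul_Emat_transpose_apply _ _ _ _ hkk]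
  split_ifs with hij hji hji
  · rw [hskew, neg_neg]
  · exact absurd hij.symm hji
  · exact absurd hji.symm hij
  · rw [hkε, hkε, hskew j i]
    simp only [mul_neg, neg_neg]
    ring

theorem Fmat_transpose_mul_rectDiagonal_mul_Emat [Fintype I] [Fintype Iuf] {d : Iuf → ℤ}
    (hd : ∀ i, 0 < d i) (hsym : ∀ i j : Iuf, d i * ε j i = -(d j * ε i j)) :
    (Fmat k hk ε σ)ᵀ * rectDiagonal d * Emat k hk ε σ = rectDiagonal d := by
  ext i j
  rw [Matrix.mul_assoc, Fmat_transpose_mul_apply, rectDiagonal_mul_apply, rectDiagonal_mul_apply]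
  obtain ⟨i, hi⟩ := i
  by_cases hik : i = k
  · subst hik
    by_cases hj : j = i <;> simp [rectDiagonal, Emat_apply_left_self, hj, eq_comm]
  by_cases hj : j = k
  · subst hj
    have hscale :
        d ⟨i, hi⟩ * max (-(σ * ε ⟨j, hk⟩ i)) 0 = max (σ * ε ⟨i, hi⟩ j) 0 * d ⟨j, hk⟩ := by
      rw [mul_max_of_nonneg _ _ (hd _).le, max_mul_of_nonneg _ _ (hd _).le]
      congr 1
      · linear_combination (-σ) * hsym ⟨i, hi⟩ ⟨j, hk⟩
      · ring
    simp [rectDiagonal, hik, Emat_apply_right_self _ _ _ _ hik, Emat_apply_left_self, hscale]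
  · simp [rectDiagonal, hik, Emat_apply_of_ne _ _ _ _ _ hj, Ne.symm hj, one_apply]

end Mutation

theorem stmt_6_general {I : Type*} [Fintype I] [DecidableEq I]
    {Iuf : Set I} [DecidablePred (· ∈ Iuf)]
    (k : I) (hk : k ∈ Iuf)
    (ε : Matrix ↥Iuf I ℤ)
    (hεskew : ∀ i j : ↥Iuf, ε i (j : I) = -(ε j (i : I)))
    (Pmat : Matrix I I ℤ)
    (hPskew : Pmatᵀ = -Pmat)
    (d : ↥Iuf → ℤ) (hd : ∀ i, 0 < d i)
    (hcompat : ∀ (i : ↥Iuf) (j : I),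
      ∑ b : I, ε i b * Pmat b j = if (i : I) = j then d i else 0)
    (σ : ℤ)
    (ε' : Matrix ↥Iuf I ℤ) (hε' : ε' = (Fmat k hk ε σ)ᵀ * ε * (Emat k hk ε σ)ᵀ)
    (Pmat' : Matrix I I ℤ) (hPmat' : Pmat' = (Emat k hk ε σ)ᵀ * Pmat * Emat k hk ε σ) :
    Pmat'ᵀ = -Pmat' ∧
      (∀ i j : ↥Iuf, ε' i (j : I) = -(ε' j (i : I))) ∧
      ∀ (i : ↥Iuf) (j : I),
        ∑ b : I, ε' i b * Pmat' b j = if (i : I) = j then d i else 0 := by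
  have hεP : ε * Pmat = rectDiagonal d := by
    ext i j
    exact mul_apply.trans (hcompat i j)
  refine ⟨?_, fun i j => ?_, fun i j => ?_⟩
  · rw [hPmat', transpose_mul, transpose_mul, transpose_transpose, hPskew, Matrix.neg_mul,
      Matrix.mul_neg, Matrix.mul_assoc]
  · rw [hε']
    exact Fmat_transpose_mul_mul_Emat_transpose_apply_eq_neg k hk ε σ hεskew i j
  · have hmut : ε' * Pmat' = rectDiagonal d := by
      rw [hε', hPmat']
      simp only [Matrix.mul_assoc]
      rw [← Matrix.mul_assoc (Emat k hk ε σ)ᵀ, Emat_transpose_mul_self, Matrix.one_mul,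
        ← Matrix.mul_assoc ε, hεP, ← Matrix.mul_assoc,
        Fmat_transpose_mul_rectDiagonal_mul_Emat _ _ _ _ hd
          (skewSymmetrizable_of_mul_eq_rectDiagonal hPskew hεP)]
    exact mul_apply.symm.trans (congr_fun (congr_fun hmut i) j)

/-- Well-definedness of quantum seed mutation (preservation of compatible
pairs): with `ε' := F_{k,σ}ᵀ · ε · E_{k,σ}ᵀ` and `Π' := E_{k,σ}ᵀ · Π · E_{k,σ}` for either
sign `σ ∈ {1,-1}`, the matrix `Π'` is skew-symmetric, the principal `I_uf × I_uf`
submatrix of `ε'` is skew-symmetric, and `(ε', Π')` again satisfies the compatibility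
relation `∑_b ε'_{ib} Π'_{bj} = δ_{ij} d_i` with the same positive integers `d_i`. -/
theorem stmt_6 {I : Type*} [Fintype I] [DecidableEq I]
    {Iuf : Set I} [DecidablePred (· ∈ Iuf)]
    (k : I) (hk : k ∈ Iuf)
    (ε : Matrix ↥Iuf I ℤ)
    (hεskew : ∀ i j : ↥Iuf, ε i (j : I) = -(ε j (i : I)))
    (Pmat : Matrix I I ℤ)
    (hPskew : Pmatᵀ = -Pmat)
    (d : ↥Iuf → ℤ) (hd : ∀ i, 0 < d i)
    (hcompat : ∀ (i : ↥Iuf) (j : I),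
      ∑ b : I, ε i b * Pmat b j = if (i : I) = j then d i else 0)
    (σ : ℤ) (hσ : σ = 1 ∨ σ = -1)
    (ε' : Matrix ↥Iuf I ℤ) (hε' : ε' = (Fmat k hk ε σ)ᵀ * ε * (Emat k hk ε σ)ᵀ)
    (Pmat' : Matrix I I ℤ) (hPmat' : Pmat' = (Emat k hk ε σ)ᵀ * Pmat * Emat k hk ε σ) :
    Pmat'ᵀ = -Pmat' ∧
      (∀ i j : ↥Iuf, ε' i (j : I) = -(ε' j (i : I))) ∧
      ∀ (i : ↥Iuf) (j : I),
        ∑ b : I, ε' i b * Pmat' b j = if (i : I) = j then d i else 0 :=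
  stmt_6_general k hk ε hεskew Pmat hPskew d hd hcompat σ ε' hε' Pmat' hPmat'
end

section
/- Compatibility forces skew-symmetrizability of the exchange matrix (an intermediate claim underlying the well-definedness of quantum seed mutation): if ε is an integer matrix with rows indexed by I_uf and columns indexed by I, Π is a skew-symmetric integer I × I matrix, and (d_i)_{i∈I_uf} are positive integers such that ∑_{b∈I} ε_{ib} · Π_{bj} = δ_{ij} · d_i for all i ∈ I_uf and j ∈ I, then d_i · ε_{ji} = -d_j · ε_{ij} for all i, j ∈ I_uf. -/
open Matrix

/-! Pairing the compatibility relation `ε Π = (δ_{ij} d_i)` with `εᵀ` on the right computes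
the entries of `ε Π εᵀ` as `d_i ε_{ji}`; skew-symmetry of `ε Π εᵀ` then gives the claim. -/

namespace Matrix

variable {l m n R : Type*} [Fintype n]

theorem mul_mul_transpose_transpose_of_transpose_eq_neg [CommRing R]
    (A : Matrix m n R) {P : Matrix n n R} (hP : Pᵀ = -P) :
    (A * P * Aᵀ)ᵀ = -(A * P * Aᵀ) := by
  simp [transpose_mul, hP, Matrix.mul_assoc]

theorem mul_transpose_apply_of_row_eq_ite [DecidableEq n] [CommSemiring R]
    {B : Matrix m n R} (A : Matrix l n R) {i : m} {k : n} {c : R}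
    (hB : ∀ b, B i b = if k = b then c else 0) (j : l) :
    (B * Aᵀ) i j = c * A j k := by
  simp [mul_apply, hB]

end Matrix

theorem stmt_8_general {I : Type*} [Fintype I] [DecidableEq I]
    {Iuf : Set I}
    (ε : Matrix ↥Iuf I ℤ)
    (Pmat : Matrix I I ℤ)
    (hPskew : Pmatᵀ = -Pmat)
    (d : ↥Iuf → ℤ)
    (hcompat : ∀ (i : ↥Iuf) (j : I),
      ∑ b : I, ε i b * Pmat b j = if (i : I) = j then d i else 0) :
    ∀ i j : ↥Iuf, d i * ε j (i : I) = -(d j * ε i (j : I)) := by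
  intro i j
  have hskew := congr_fun₂ (ε.mul_mul_transpose_transpose_of_transpose_eq_neg hPskew) j i
  calc d i * ε j i = (ε * Pmat * εᵀ) i j :=
        (mul_transpose_apply_of_row_eq_ite ε (hcompat i) j).symm
    _ = -(ε * Pmat * εᵀ) j i := hskew
    _ = -(d j * ε i j) := by rw [mul_transpose_apply_of_row_eq_ite ε (hcompat j) i]

/-- Compatibility forces skew-symmetrizability of the exchange matrix:
if `ε` is an integer matrix with rows indexed by `I_uf` and columns by `I`, `Π` is a
skew-symmetric integer `I × I` matrix, and `(d_i)` are positive integers such that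
`∑_b ε_{ib} Π_{bj} = δ_{ij} d_i` for all `i ∈ I_uf`, `j ∈ I`, then
`d_i · ε_{ji} = -d_j · ε_{ij}` for all `i, j ∈ I_uf`. -/
theorem stmt_8 {I : Type*} [Fintype I] [DecidableEq I]
    {Iuf : Set I} [DecidablePred (· ∈ Iuf)]
    (ε : Matrix ↥Iuf I ℤ)
    (Pmat : Matrix I I ℤ)
    (hPskew : Pmatᵀ = -Pmat)
    (d : ↥Iuf → ℤ) (hd : ∀ i, 0 < d i)
    (hcompat : ∀ (i : ↥Iuf) (j : I),
      ∑ b : I, ε i b * Pmat b j = if (i : I) = j then d i else 0) :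
    ∀ i j : ↥Iuf, d i * ε j (i : I) = -(d j * ε i (j : I)) :=
  stmt_8_general ε Pmat hPskew d hcompat
end
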